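/- arXiv:1706.00142 — 2 statements merged into one kernel-verified Lean document; each statement's English description precedes it below -/
import Mathlib

section
/- Suppose (Φ₁, ξ₁) ∈ 𝒜 satisfies ⟨Φ₁,ξ₁⟩_F = 1 and minimizes the energy, i.e. D[Φ₁] + S[ξ₁] ≤ D[Φ] + S[ξ] for every (Φ,ξ) ∈ 𝒜 with ⟨Φ,ξ⟩_F = 1. Set ω₁ = D[Φ₁] + S[ξ₁]. Then (ω₁, Φ₁, ξ₁) is a weak solution of the sloshing problem with surface tension on (D, F) with Bond number Bo. -/
open MeasureTheory RealInnerProductSpace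

noncomputable section

abbrev E2 : Type := EuclideanSpace ℝ (Fin 2)
abbrev E3 : Type := EuclideanSpace ℝ (Fin 3)

/-- Embedding of the free surface plane: `p = (x,y) ↦ (x,y,0)`. -/
def emb (p : E2) : E3 := (WithLp.equiv 2 (Fin 3 → ℝ)).symm ![p 0, p 1, 0]

/-- Dirichlet energy `D[Φ] = (1/2)∫_D ‖∇Φ‖²`. -/
def Dir (D : Set E3) (Φ : E3 → ℝ) : ℝ := (1/2) * ∫ x in D, ‖gradient Φ x‖^2

/-- Free surface energy `S[ξ] = (1/2)∫_F (ξ² + Bo⁻¹‖∇ξ‖²)`. -/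
def Surf (F : Set E2) (Bo : ℝ) (ξ : E2 → ℝ) : ℝ :=
  (1/2) * ∫ p in F, (ξ p ^ 2 + Bo⁻¹ * ‖gradient ξ p‖^2)

/-- The pairing `⟨Φ,ξ⟩_F = ∫_F Φ(x,y,0) ξ(x,y)`. -/
def pairF (F : Set E2) (Φ : E3 → ℝ) (ξ : E2 → ℝ) : ℝ := ∫ p in F, Φ (emb p) * ξ p

/-- `(ω,Φ,ξ)` is a weak solution of the sloshing problem with surface tension. -/
def IsWeakSol (D : Set E3) (F : Set E2) (Bo ω : ℝ) (Φ : E3 → ℝ) (ξ : E2 → ℝ) : Prop :=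
  ContDiff ℝ 1 Φ ∧ ContDiff ℝ 1 ξ ∧
  (∀ f : E3 → ℝ, ContDiff ℝ 1 f →
    (∫ x in D, ⟪gradient Φ x, gradient f x⟫) = ω * ∫ p in F, ξ p * f (emb p)) ∧
  (∀ g : E2 → ℝ, ContDiff ℝ 1 g →
    (∫ p in F, (ξ p * g p + Bo⁻¹ * ⟪gradient ξ p, gradient g p⟫))
      = ω * ∫ p in F, Φ (emb p) * g p)

/-- The admissible class `𝒜`: pairs of C¹ functions with zero mean over `F`. -/
def Adm (F : Set E2) (Φ : E3 → ℝ) (ξ : E2 → ℝ) : Prop :=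
  ContDiff ℝ 1 Φ ∧ ContDiff ℝ 1 ξ ∧
  (∫ p in F, Φ (emb p)) = 0 ∧ (∫ p in F, ξ p) = 0


/-! Rescaling a minimizer to `(r Φ₁, r⁻¹ ξ₁)` keeps it admissible with unit pairing, so
`r ↦ r² D[Φ₁] + r⁻² S[ξ₁]` is minimal at `r = 1`: this is equipartition `D[Φ₁] = S[ξ₁]`, whence
`ω₁ = 2 D[Φ₁] = 2 S[ξ₁]`. For a test function `f` shifted by a constant to have mean zero on `F`
(which changes neither side of (K), as `ξ₁` has mean zero), the competitor
`(1 + t ⟨f, ξ₁⟩_F)⁻¹ (Φ₁ + t f)` is again admissible with unit pairing. Its Dirichlet energy is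
`(1 + t ⟨f, ξ₁⟩_F)⁻² (D[Φ₁] + t ∫_D ⟨∇Φ₁, ∇f⟩ + t² D[f])`, and the vanishing of its derivative at
`t = 0` reads `∫_D ⟨∇Φ₁, ∇f⟩ = 2 D[Φ₁] ⟨f, ξ₁⟩_F`, which is (K). Varying `ξ₁` in the same way
gives (D). -/

open Topology Bornology

theorem eq_of_forall_le_sq_mul_add_inv_sq_mul {a b : ℝ}
    (h : ∀ r : ℝ, 0 < r → a + b ≤ r ^ 2 * a + r⁻¹ ^ 2 * b) : a = b := by
  have hmin : IsLocalMin (fun r : ℝ => r ^ 2 * a + r⁻¹ ^ 2 * b) 1 := by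
    filter_upwards [Ioi_mem_nhds one_pos] with r hr
    simpa using h r hr
  have hderiv : HasDerivAt (fun r : ℝ => r ^ 2 * a + r⁻¹ ^ 2 * b) (2 * a - 2 * b) 1 :=
    (((hasDerivAt_pow 2 (1 : ℝ)).mul_const a).fun_add
      (((hasDerivAt_inv one_ne_zero).fun_pow 2).mul_const b)).congr_deriv (by norm_num; ring)
  linarith [hmin.hasDerivAt_eq_zero hderiv]

theorem eq_two_mul_mul_of_forall_le_inv_sq_mul {q₀ b q c : ℝ}
    (h : ∀ t : ℝ, 0 < 1 + t * c → q₀ ≤ (1 + t * c)⁻¹ ^ 2 * (q₀ + t * b + t ^ 2 * q)) :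
    b = 2 * c * q₀ := by
  have hmin : IsLocalMin (fun t : ℝ => (1 + t * c)⁻¹ ^ 2 * (q₀ + t * b + t ^ 2 * q)) 0 := by
    have hpos : {t : ℝ | 0 < 1 + t * c} ∈ 𝓝 0 :=
      (isOpen_lt continuous_const (by fun_prop)).mem_nhds (by simp)
    filter_upwards [hpos] with t ht
    simpa using h t ht
  have hlin : HasDerivAt (fun t : ℝ => 1 + t * c) c 0 := by
    simpa using ((hasDerivAt_id (0 : ℝ)).mul_const c).const_add 1
  have hquad : HasDerivAt (fun t : ℝ => q₀ + t * b + t ^ 2 * q) b 0 := by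
    simpa using (((hasDerivAt_id (0 : ℝ)).mul_const b).const_add q₀).fun_add
      ((hasDerivAt_pow 2 (0 : ℝ)).mul_const q)
  have hderiv : HasDerivAt (fun t : ℝ => (1 + t * c)⁻¹ ^ 2 * (q₀ + t * b + t ^ 2 * q))
      (b - 2 * c * q₀) 0 :=
    (((hlin.inv (by simp)).fun_pow 2).fun_mul hquad).congr_deriv (by simp; ring)
  linarith [hmin.hasDerivAt_eq_zero hderiv]

/-- The Lagrange multiplier rule for a functional that is quadratic along the lines through `u`,
under a constraint `L = 1` that is linear along them. -/
theorem IsMinOn.eq_two_mul_mul_of_quadratic {X : Type*} {Q L : (X → ℝ) → ℝ}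
    {P : (X → ℝ) → Prop} {u v : X → ℝ} {b : ℝ}
    (hmin : IsMinOn Q {w | P w ∧ L w = 1} u) (hLu : L u = 1)
    (hP : ∀ s t : ℝ, P (fun x => s * (u x + t * v x)))
    (hL : ∀ s t : ℝ, L (fun x => s * (u x + t * v x)) = s * (L u + t * L v))
    (hQ : ∀ s t : ℝ, Q (fun x => s * (u x + t * v x)) = s ^ 2 * (Q u + t * b + t ^ 2 * Q v)) :
    b = 2 * L v * Q u := by
  refine eq_two_mul_mul_of_forall_le_inv_sq_mul (q := Q v) fun t ht => ?_
  rw [← hQ]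
  refine hmin ⟨hP _ _, ?_⟩
  rw [hL, hLu]
  field_simp

section Gradient

variable {E : Type*} [NormedAddCommGroup E] [InnerProductSpace ℝ E] [CompleteSpace E]
  {u v : E → ℝ} {x : E}

theorem gradient_const_mul (hu : DifferentiableAt ℝ u x) (c : ℝ) :
    gradient (fun y => c * u y) x = c • gradient u x := by
  simp only [gradient, fderiv_const_mul hu, map_smul]

theorem gradient_add (hu : DifferentiableAt ℝ u x) (hv : DifferentiableAt ℝ v x) :
    gradient (fun y => u y + v y) x = gradient u x + gradient v x := by
  simp only [gradient, fderiv_fun_add hu hv, map_add]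

theorem gradient_sub_const (c : ℝ) : gradient (fun y => u y - c) x = gradient u x := by
  simp only [gradient, fderiv_sub_const]

theorem gradient_mul_add_mul (hu : DifferentiableAt ℝ u x) (hv : DifferentiableAt ℝ v x)
    (s t : ℝ) :
    gradient (fun y => s * (u y + t * v y)) x = s • (gradient u x + t • gradient v x) := by
  rw [gradient_const_mul (hu.fun_add (hv.const_mul t)), gradient_add hu (hv.const_mul t),
    gradient_const_mul hv]

@[fun_prop]
theorem ContDiff.continuous_gradient (hu : ContDiff ℝ 1 u) : Continuous (gradient u) :=
  (InnerProductSpace.toDual ℝ E).symm.continuous.comp (hu.continuous_fderiv one_ne_zero)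

end Gradient

theorem norm_smul_add_smul_sq {E : Type*} [NormedAddCommGroup E] [InnerProductSpace ℝ E]
    (a b : E) (s t : ℝ) :
    ‖s • (a + t • b)‖ ^ 2 = s ^ 2 * (‖a‖ ^ 2 + 2 * t * ⟪a, b⟫ + t ^ 2 * ‖b‖ ^ 2) := by
  rw [norm_smul, mul_pow, Real.norm_eq_abs, sq_abs, norm_add_sq_real, norm_smul,
    real_inner_smul_right, mul_pow, Real.norm_eq_abs, sq_abs]
  ring

theorem Continuous.integrableOn_of_isBounded {X : Type*} [MetricSpace X] [ProperSpace X]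
    [MeasurableSpace X] [OpensMeasurableSpace X] {μ : Measure X} [IsFiniteMeasureOnCompacts μ]
    {f : X → ℝ} (hf : Continuous f) {s : Set X} (hs : IsBounded s) : IntegrableOn f s μ :=
  (hf.continuousOn.integrableOn_compact hs.isCompact_closure).mono_set subset_closure

section Integral

variable {X : Type*} [MeasurableSpace X] {μ : Measure X}

theorem integral_add_mul_add_mul {f g h : X → ℝ} (hf : Integrable f μ) (hg : Integrable g μ)
    (hh : Integrable h μ) (a b : ℝ) :
    ∫ x, f x + a * g x + b * h x ∂μ = (∫ x, f x ∂μ) + a * (∫ x, g x ∂μ) + b * ∫ x, h x ∂μ := by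
  rw [integral_add (by exact hf.add (hg.const_mul a)) (hh.const_mul b),
    integral_add hf (hg.const_mul a), integral_const_mul, integral_const_mul]

theorem integral_mul_add_mul {f g : X → ℝ} (hf : Integrable f μ) (hg : Integrable g μ)
    (s t : ℝ) : ∫ x, s * (f x + t * g x) ∂μ = s * ((∫ x, f x ∂μ) + t * ∫ x, g x ∂μ) := by
  rw [integral_const_mul, integral_add hf (hg.const_mul t), integral_const_mul]

theorem integral_sub_const_mul_of_integral_eq_zero {f w : X → ℝ} (hf : Integrable f μ)
    (hw : Integrable w μ) (hw₀ : ∫ x, w x ∂μ = 0) (c : ℝ) :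
    ∫ x, f x - c * w x ∂μ = ∫ x, f x ∂μ := by
  rw [integral_sub hf (hw.const_mul c), integral_const_mul, hw₀, mul_zero, sub_zero]

end Integral

@[fun_prop]
theorem continuous_emb : Continuous emb :=
  (PiLp.continuous_toLp 2 _).comp (by fun_prop)

section Energies

variable {D : Set E3} {F : Set E2} {Bo : ℝ}

theorem Dir_const_mul {u : E3 → ℝ} (hu : Differentiable ℝ u) (c : ℝ) :
    Dir D (fun x => c * u x) = c ^ 2 * Dir D u := by
  simp only [Dir, gradient_const_mul (hu _), norm_smul, mul_pow, Real.norm_eq_abs, sq_abs,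
    integral_const_mul]
  ring

theorem Surf_const_mul {u : E2 → ℝ} (hu : Differentiable ℝ u) (c : ℝ) :
    Surf F Bo (fun p => c * u p) = c ^ 2 * Surf F Bo u := by
  have key : ∀ p, (c * u p) ^ 2 + Bo⁻¹ * ‖gradient (fun q => c * u q) p‖ ^ 2
      = c ^ 2 * (u p ^ 2 + Bo⁻¹ * ‖gradient u p‖ ^ 2) := fun p => by
    simp only [gradient_const_mul (hu p), norm_smul, mul_pow, Real.norm_eq_abs, sq_abs]
    ring
  simp only [Surf, key, integral_const_mul]
  ring

theorem Dir_mul_add_mul (hD : IsBounded D) {u v : E3 → ℝ} (hu : ContDiff ℝ 1 u)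
    (hv : ContDiff ℝ 1 v) (s t : ℝ) :
    Dir D (fun x => s * (u x + t * v x))
      = s ^ 2 * (Dir D u + t * (∫ x in D, ⟪gradient u x, gradient v x⟫) + t ^ 2 * Dir D v) := by
  have key : ∀ x, ‖gradient (fun y => s * (u y + t * v y)) x‖ ^ 2 = s ^ 2 *
      (‖gradient u x‖ ^ 2 + 2 * t * ⟪gradient u x, gradient v x⟫ + t ^ 2 * ‖gradient v x‖ ^ 2) :=
    fun x => by
      rw [gradient_mul_add_mul (hu.differentiable one_ne_zero x)
        (hv.differentiable one_ne_zero x), norm_smul_add_smul_sq]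
  simp only [Dir, key, integral_const_mul]
  rw [integral_add_mul_add_mul]
  · ring
  all_goals exact Continuous.integrableOn_of_isBounded (by fun_prop) hD

theorem Surf_mul_add_mul (hF : IsBounded F) {u v : E2 → ℝ} (hu : ContDiff ℝ 1 u)
    (hv : ContDiff ℝ 1 v) (s t : ℝ) :
    Surf F Bo (fun p => s * (u p + t * v p))
      = s ^ 2 * (Surf F Bo u + t * (∫ p in F, (u p * v p + Bo⁻¹ * ⟪gradient u p, gradient v p⟫))
        + t ^ 2 * Surf F Bo v) := by
  have key : ∀ p, (s * (u p + t * v p)) ^ 2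
        + Bo⁻¹ * ‖gradient (fun q => s * (u q + t * v q)) p‖ ^ 2
      = s ^ 2 * ((u p ^ 2 + Bo⁻¹ * ‖gradient u p‖ ^ 2)
        + 2 * t * (u p * v p + Bo⁻¹ * ⟪gradient u p, gradient v p⟫)
        + t ^ 2 * (v p ^ 2 + Bo⁻¹ * ‖gradient v p‖ ^ 2)) := fun p => by
    rw [gradient_mul_add_mul (hu.differentiable one_ne_zero p)
      (hv.differentiable one_ne_zero p), norm_smul_add_smul_sq]
    ring
  simp only [Surf, key, integral_const_mul]
  rw [integral_add_mul_add_mul]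
  · ring
  all_goals exact Continuous.integrableOn_of_isBounded (by fun_prop) hF

end Energies

section Minimizer

variable {D : Set E3} {F : Set E2} {Bo : ℝ} {Φ₁ : E3 → ℝ} {ξ₁ : E2 → ℝ}

theorem Adm.mul_add_mul_left (hF : IsBounded F) {u v : E3 → ℝ} {ξ : E2 → ℝ} (hu : Adm F u ξ)
    (hv : Adm F v ξ) (s t : ℝ) : Adm F (fun x => s * (u x + t * v x)) ξ := by
  obtain ⟨hu₁, hξ, hu₀, hξ₀⟩ := hu
  obtain ⟨hv₁, -, hv₀, -⟩ := hv
  refine ⟨contDiff_const.mul (hu₁.add (contDiff_const.mul hv₁)), hξ, ?_, hξ₀⟩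
  rw [integral_mul_add_mul (f := fun p => u (emb p)) (g := fun p => v (emb p))
    (Continuous.integrableOn_of_isBounded (by fun_prop) hF)
    (Continuous.integrableOn_of_isBounded (by fun_prop) hF), hu₀, hv₀]
  ring

theorem Adm.mul_add_mul_right (hF : IsBounded F) {Φ : E3 → ℝ} {u v : E2 → ℝ} (hu : Adm F Φ u)
    (hv : Adm F Φ v) (s t : ℝ) : Adm F Φ (fun p => s * (u p + t * v p)) := by
  obtain ⟨hΦ, hu₁, hΦ₀, hu₀⟩ := hu
  obtain ⟨-, hv₁, -, hv₀⟩ := hv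
  refine ⟨hΦ, contDiff_const.mul (hu₁.add (contDiff_const.mul hv₁)), hΦ₀, ?_⟩
  rw [integral_mul_add_mul (Continuous.integrableOn_of_isBounded (by fun_prop) hF)
    (Continuous.integrableOn_of_isBounded (by fun_prop) hF), hu₀, hv₀]
  ring

theorem pairF_mul_add_mul_left (hF : IsBounded F) {u v : E3 → ℝ} {ξ : E2 → ℝ}
    (hu : Continuous u) (hv : Continuous v) (hξ : Continuous ξ) (s t : ℝ) :
    pairF F (fun x => s * (u x + t * v x)) ξ = s * (pairF F u ξ + t * pairF F v ξ) := by
  simp only [pairF, mul_assoc, add_mul]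
  exact integral_mul_add_mul (Continuous.integrableOn_of_isBounded (by fun_prop) hF)
    (Continuous.integrableOn_of_isBounded (by fun_prop) hF) s t

theorem pairF_mul_add_mul_right (hF : IsBounded F) {Φ : E3 → ℝ} {u v : E2 → ℝ}
    (hΦ : Continuous Φ) (hu : Continuous u) (hv : Continuous v) (s t : ℝ) :
    pairF F Φ (fun p => s * (u p + t * v p)) = s * (pairF F Φ u + t * pairF F Φ v) := by
  have key : ∀ p, Φ (emb p) * (s * (u p + t * v p))
      = s * (Φ (emb p) * u p + t * (Φ (emb p) * v p)) := fun p => by ring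
  simp only [pairF, key]
  exact integral_mul_add_mul (Continuous.integrableOn_of_isBounded (by fun_prop) hF)
    (Continuous.integrableOn_of_isBounded (by fun_prop) hF) s t

def IsSloshingMinimizer (D : Set E3) (F : Set E2) (Bo : ℝ) (Φ₁ : E3 → ℝ) (ξ₁ : E2 → ℝ) : Prop :=
  Adm F Φ₁ ξ₁ ∧ pairF F Φ₁ ξ₁ = 1 ∧ ∀ Φ ξ, Adm F Φ ξ → pairF F Φ ξ = 1 →
    Dir D Φ₁ + Surf F Bo ξ₁ ≤ Dir D Φ + Surf F Bo ξ

namespace IsSloshingMinimizer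

theorem dir_eq_surf (h : IsSloshingMinimizer D F Bo Φ₁ ξ₁) : Dir D Φ₁ = Surf F Bo ξ₁ := by
  obtain ⟨⟨hΦ, hξ, hΦ₀, hξ₀⟩, hpair, hmin⟩ := h
  refine eq_of_forall_le_sq_mul_add_inv_sq_mul fun r hr => ?_
  rw [← Dir_const_mul (hΦ.differentiable one_ne_zero),
    ← Surf_const_mul (hξ.differentiable one_ne_zero)]
  refine hmin _ _ ⟨contDiff_const.mul hΦ, contDiff_const.mul hξ, ?_, ?_⟩ ?_
  · simp only [integral_const_mul, hΦ₀, mul_zero]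
  · simp only [integral_const_mul, hξ₀, mul_zero]
  · rw [← hpair]
    refine integral_congr_ae (ae_of_all _ fun p => ?_)
    field_simp

theorem isMinOn_dir (h : IsSloshingMinimizer D F Bo Φ₁ ξ₁) :
    IsMinOn (Dir D) {Φ | Adm F Φ ξ₁ ∧ pairF F Φ ξ₁ = 1} Φ₁ :=
  fun Φ ⟨hΦ, hpair⟩ => le_of_add_le_add_right (h.2.2 Φ ξ₁ hΦ hpair)

theorem isMinOn_surf (h : IsSloshingMinimizer D F Bo Φ₁ ξ₁) :
    IsMinOn (Surf F Bo) {ξ | Adm F Φ₁ ξ ∧ pairF F Φ₁ ξ = 1} ξ₁ :=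
  fun ξ ⟨hξ, hpair⟩ => le_of_add_le_add_left (h.2.2 Φ₁ ξ hξ hpair)

theorem kinematic (h : IsSloshingMinimizer D F Bo Φ₁ ξ₁) (hD : IsBounded D) (hF : IsBounded F)
    {f : E3 → ℝ} (hf : ContDiff ℝ 1 f) :
    ∫ x in D, ⟪gradient Φ₁ x, gradient f x⟫ = 2 * Dir D Φ₁ * ∫ p in F, ξ₁ p * f (emb p) := by
  have ⟨⟨hΦ₁, hξ₁, _, hξ₁₀⟩, hpair, _⟩ := h
  set c := ⨍ p in F, f (emb p)
  have hf₀ : Adm F (fun x => f x - c) ξ₁ :=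
    ⟨hf.sub contDiff_const, hξ₁, setAverage_sub_setAverage hF.measure_lt_top.ne _, hξ₁₀⟩
  have hvar := h.isMinOn_dir.eq_two_mul_mul_of_quadratic hpair (h.1.mul_add_mul_left hF hf₀)
    (pairF_mul_add_mul_left hF hΦ₁.continuous hf₀.1.continuous hξ₁.continuous)
    (Dir_mul_add_mul hD hΦ₁ hf₀.1)
  have hpair_f : pairF F (fun x => f x - c) ξ₁ = ∫ p in F, ξ₁ p * f (emb p) := by
    rw [← integral_sub_const_mul_of_integral_eq_zero (f := fun p => ξ₁ p * f (emb p))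
      (Continuous.integrableOn_of_isBounded (by fun_prop) hF)
      (Continuous.integrableOn_of_isBounded (by fun_prop) hF) hξ₁₀ c]
    exact integral_congr_ae (ae_of_all _ fun p => by ring)
  simp only [gradient_sub_const] at hvar
  rw [hvar, hpair_f]
  ring

theorem dynamic (h : IsSloshingMinimizer D F Bo Φ₁ ξ₁) (hF : IsBounded F)
    {g : E2 → ℝ} (hg : ContDiff ℝ 1 g) :
    ∫ p in F, (ξ₁ p * g p + Bo⁻¹ * ⟪gradient ξ₁ p, gradient g p⟫)
      = 2 * Surf F Bo ξ₁ * ∫ p in F, Φ₁ (emb p) * g p := by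
  have ⟨⟨hΦ₁, hξ₁, hΦ₁₀, hξ₁₀⟩, hpair, _⟩ := h
  set c := ⨍ p in F, g p
  have hg₀ : Adm F Φ₁ (fun p => g p - c) :=
    ⟨hΦ₁, hg.sub contDiff_const, hΦ₁₀, setAverage_sub_setAverage hF.measure_lt_top.ne _⟩
  have hvar := h.isMinOn_surf.eq_two_mul_mul_of_quadratic hpair (h.1.mul_add_mul_right hF hg₀)
    (pairF_mul_add_mul_right hF hΦ₁.continuous hξ₁.continuous hg₀.2.1.continuous)
    (Surf_mul_add_mul hF hξ₁ hg₀.2.1)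
  have hform : ∫ p in F, (ξ₁ p * (g p - c) + Bo⁻¹ * ⟪gradient ξ₁ p, gradient g p⟫)
      = ∫ p in F, (ξ₁ p * g p + Bo⁻¹ * ⟪gradient ξ₁ p, gradient g p⟫) := by
    rw [← integral_sub_const_mul_of_integral_eq_zero
      (f := fun p => ξ₁ p * g p + Bo⁻¹ * ⟪gradient ξ₁ p, gradient g p⟫)
      (Continuous.integrableOn_of_isBounded (by fun_prop) hF)
      (Continuous.integrableOn_of_isBounded (by fun_prop) hF) hξ₁₀ c]
    exact integral_congr_ae (ae_of_all _ fun p => by ring)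
  have hpair_g : pairF F Φ₁ (fun p => g p - c) = ∫ p in F, Φ₁ (emb p) * g p := by
    rw [← integral_sub_const_mul_of_integral_eq_zero (f := fun p => Φ₁ (emb p) * g p)
      (Continuous.integrableOn_of_isBounded (by fun_prop) hF)
      (Continuous.integrableOn_of_isBounded (by fun_prop) hF) hΦ₁₀ c]
    exact integral_congr_ae (ae_of_all _ fun p => by ring)
  simp only [gradient_sub_const] at hvar
  rw [← hform, hvar, hpair_g]
  ring

end IsSloshingMinimizer

end Minimizer

theorem minimizer_is_weakSol_general
    (D : Set E3) (F : Set E2)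
    (hD : Bornology.IsBounded D) (hF : Bornology.IsBounded F)
    (Bo : ℝ)
    (Φ₁ : E3 → ℝ) (ξ₁ : E2 → ℝ)
    (hadm : Adm F Φ₁ ξ₁) (hpair : pairF F Φ₁ ξ₁ = 1)
    (hmin : ∀ Φ : E3 → ℝ, ∀ ξ : E2 → ℝ, Adm F Φ ξ → pairF F Φ ξ = 1 →
      Dir D Φ₁ + Surf F Bo ξ₁ ≤ Dir D Φ + Surf F Bo ξ) :
    IsWeakSol D F Bo (Dir D Φ₁ + Surf F Bo ξ₁) Φ₁ ξ₁ := by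
  have h : IsSloshingMinimizer D F Bo Φ₁ ξ₁ := ⟨hadm, hpair, hmin⟩
  have hω : Dir D Φ₁ + Surf F Bo ξ₁ = 2 * Dir D Φ₁ := by rw [h.dir_eq_surf]; ring
  refine ⟨hadm.1, hadm.2.1, fun f hf => ?_, fun g hg => ?_⟩
  · rw [hω]
    exact h.kinematic hD hF hf
  · rw [hω, h.dir_eq_surf]
    exact h.dynamic hF hg

/-- Euler–Lagrange part of Theorem 1.1. A minimizer `(Φ₁,ξ₁)` of
`D[Φ] + S[ξ]` over `𝒜` subject to `⟨Φ,ξ⟩_F = 1` is, with `ω₁ = D[Φ₁] + S[ξ₁]`,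
a weak solution of the sloshing problem with surface tension. -/
theorem minimizer_is_weakSol
    (D : Set E3) (F : Set E2)
    (hD : Bornology.IsBounded D) (hF : Bornology.IsBounded F)
    (hDm : MeasurableSet D) (hFm : MeasurableSet F)
    (Bo : ℝ) (hBo : 0 < Bo)
    (Φ₁ : E3 → ℝ) (ξ₁ : E2 → ℝ)
    (hadm : Adm F Φ₁ ξ₁) (hpair : pairF F Φ₁ ξ₁ = 1)
    (hmin : ∀ Φ : E3 → ℝ, ∀ ξ : E2 → ℝ, Adm F Φ ξ → pairF F Φ ξ = 1 →
      Dir D Φ₁ + Surf F Bo ξ₁ ≤ Dir D Φ + Surf F Bo ξ) :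
    IsWeakSol D F Bo (Dir D Φ₁ + Surf F Bo ξ₁) Φ₁ ξ₁ :=
  minimizer_is_weakSol_general D F hD hF Bo Φ₁ ξ₁ hadm hpair hmin
end
end

section
/- Fix m > 1 and let (ω_j, Φ_j, ξ_j), j = 1, …, m−1, be weak solutions of the sloshing problem with surface tension on (D, F) with Bond number Bo, such that the absolute values |ω_j| are pairwise distinct and ⟨Φ_j,ξ_j⟩_F ≠ 0 for each j. Let 𝒜_m be the set of pairs (Φ,ξ) ∈ 𝒜 with ∫_F Φ(p,0) ξ_j(p) dp = 0 and ∫_F ξ(p) Φ_j(p,0) dp = 0 for all j = 1, …, m−1. Suppose (Φ_m, ξ_m) ∈ 𝒜_m satisfies ⟨Φ_m,ξ_m⟩_F = 1 and D[Φ_m] + S[ξ_m] ≤ D[Φ] + S[ξ] for every (Φ,ξ) ∈ 𝒜_m with ⟨Φ,ξ⟩_F = 1. Then, with ω_m = D[Φ_m] + S[ξ_m], the triple (ω_m, Φ_m, ξ_m) is a weak solution of the sloshing problem with surface tension on (D, F). -/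
open MeasureTheory RealInnerProductSpace

noncomputable section

/-!
Write `Q(Φ, ξ) = D[Φ] + S[ξ]` and `R(Φ, ξ) = ⟨Φ, ξ⟩_F`, quadratic forms on pairs of `C¹` functions.
If `u` minimises `Q` on `{R = 1}` inside a subspace `W`, then for `v ∈ W` the function
`t ↦ Q(u + t v) - Q(u) R(u + t v)` has a local minimum at `0` (rescale `u + t v` back onto
`{R = 1}`), so its derivative `polar Q u v - Q(u) polar R u v` vanishes: these are the weak
equations, tested against `W` only.

Here `W` is cut out by pairing against the constants and the given modes `(Φ_j, ξ_j)`. This family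
is biorthogonal for the pairing: distinct modes are orthogonal because `ω_j² - ω_k²` multiplies
their pairing, and modes have mean zero because `ω_j ≠ 0`. Hence every test pair is an element of
`W` plus a combination of the family, and on the family both sides of the weak equations vanish by
the orthogonality conditions on the minimiser.
-/

open Filter Topology Bornology
open LinearMap (BilinForm)
open scoped Gradient

theorem QuadraticMap.map_add_smul {M : Type*} [AddCommGroup M] [Module ℝ M]
    (Q : QuadraticMap ℝ M ℝ) (u v : M) (t : ℝ) :
    Q (u + t • v) = Q u + t * polar Q u v + t ^ 2 * Q v := by
  rw [QuadraticMap.map_add Q, polar_smul_right, Q.map_smul, smul_eq_mul, smul_eq_mul]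
  ring

theorem QuadraticMap.polar_eq_mul_polar_of_isMinOn {M : Type*} [AddCommGroup M] [Module ℝ M]
    {Q R : QuadraticMap ℝ M ℝ} {W : Submodule ℝ M} {u : M} (hu : u ∈ W) (hRu : R u = 1)
    (hmin : IsMinOn Q {w | w ∈ W ∧ R w = 1} u) {v : M} (hv : v ∈ W) :
    polar Q u v = Q u * polar R u v := by
  have hR : Tendsto (fun t : ℝ => R (u + t • v)) (𝓝 0) (𝓝 1) := by
    simp_rw [R.map_add_smul, ← hRu]
    exact Continuous.tendsto' (by fun_prop) _ _ (by simp)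
  have hloc : IsLocalMin (fun t : ℝ => Q (u + t • v) - Q u * R (u + t • v)) 0 := by
    filter_upwards [hR.eventually (lt_mem_nhds one_pos)] with t ht
    set s := (√(R (u + t • v)))⁻¹
    have hss : s * s = (R (u + t • v))⁻¹ := by rw [← mul_inv, Real.mul_self_sqrt ht.le]
    have hw : s • (u + t • v) ∈ {w | w ∈ W ∧ R w = 1} :=
      ⟨W.smul_mem _ (W.add_mem hu (W.smul_mem _ hv)), by
        rw [R.map_smul, hss, smul_eq_mul, inv_mul_cancel₀ ht.ne']⟩
    have hle := hmin hw
    rw [Set.mem_ofPred_eq, Q.map_smul, hss, smul_eq_mul, le_inv_mul_iff₀ ht] at hle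
    simp only [zero_smul, add_zero, hRu, mul_one, sub_self]
    linarith
  have hderiv : HasDerivAt (fun t : ℝ => Q (u + t • v) - Q u * R (u + t • v))
      (polar Q u v - Q u * polar R u v) 0 := by
    simp_rw [Q.map_add_smul, R.map_add_smul]
    have hsq : HasDerivAt (fun t : ℝ => t ^ 2) 0 0 := by simpa using hasDerivAt_pow 2 (0 : ℝ)
    have hpoly (a b c : ℝ) : HasDerivAt (fun t : ℝ => a + t * b + t ^ 2 * c) b 0 := by
      simpa [add_assoc] using
        (((hasDerivAt_id (0 : ℝ)).mul_const b).add (hsq.mul_const c)).const_add a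
    exact (hpoly _ _ _).sub ((hpoly _ _ _).const_mul _)
  exact sub_eq_zero.1 (hloc.hasDerivAt_eq_zero hderiv)

theorem LinearMap.eq_of_eqOn_biorthogonal {K M N ι : Type*} [Field K] [AddCommGroup M]
    [Module K M] [AddCommGroup N] [Module K N] [Fintype ι]
    {L : ι → M →ₗ[K] K} {z : ι → M} (hLz : ∀ i k, i ≠ k → L i (z k) = 0)
    (hzz : ∀ i, L i (z i) ≠ 0) {T T' : M →ₗ[K] N}
    (hker : ∀ v, (∀ i, L i v = 0) → T v = T' v) (hz : ∀ i, T (z i) = T' (z i)) : T = T' := by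
  ext v
  set c : ι → K := fun i => L i v / L i (z i)
  have hw : ∀ k, L k (v - ∑ i, c i • z i) = 0 := by
    intro k
    rw [map_sub, map_sum, Finset.sum_eq_single k (fun i _ hik => by simp [hLz k i hik.symm])
      (by simp), map_smul, smul_eq_mul, div_mul_cancel₀ _ (hzz k), sub_self]
  have hv : v = (v - ∑ i, c i • z i) + ∑ i, c i • z i := by abel
  rw [hv, map_add, map_add, hker _ hw, map_sum, map_sum]
  simp only [map_smul, hz]

section Eigentriple

variable {M₁ M₂ : Type*} [AddCommGroup M₁] [Module ℝ M₁] [AddCommGroup M₂] [Module ℝ M₂]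
  {K : BilinForm ℝ M₁} {S : BilinForm ℝ M₂} {P : M₁ →ₗ[ℝ] M₂ →ₗ[ℝ] ℝ}

variable (K S P) in
def IsEigentriple (ω : ℝ) (Φ : M₁) (ξ : M₂) : Prop :=
  (∀ f, K Φ f = ω * P f ξ) ∧ ∀ g, S ξ g = ω * P Φ g

theorem IsEigentriple.pairing_eq_zero_of_abs_ne (hK : K.IsSymm) (hS : S.IsSymm) {ω ω' : ℝ}
    {Φ Ψ : M₁} {ξ η : M₂} (h : IsEigentriple K S P ω Φ ξ) (h' : IsEigentriple K S P ω' Ψ η)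
    (hω : |ω| ≠ |ω'|) : P Φ η = 0 := by
  have hK' : ω * P Ψ ξ = ω' * P Φ η := by rw [← h.1, ← h'.1, hK.eq]
  have hS' : ω * P Φ η = ω' * P Ψ ξ := by rw [← h.2, ← h'.2, hS.eq]
  have hsq : (ω ^ 2 - ω' ^ 2) * P Φ η = 0 := by linear_combination ω * hS' + ω' * hK'
  refine (mul_eq_zero.1 hsq).resolve_left fun h₀ => hω ?_
  exact (sq_eq_sq_iff_abs_eq_abs _ _).1 (sub_eq_zero.1 h₀)

theorem IsEigentriple.ne_zero (hS₀ : ∀ Φ ξ, S ξ ξ = 0 → P Φ ξ = 0) {ω : ℝ} {Φ : M₁} {ξ : M₂}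
    (h : IsEigentriple K S P ω Φ ξ) (hP : P Φ ξ ≠ 0) : ω ≠ 0 := by
  rintro rfl
  exact hP (hS₀ Φ ξ (by rw [h.2, zero_mul]))

theorem IsEigentriple.pairing_left_eq_zero {a : M₁} (ha : ∀ Φ, K Φ a = 0) {ω : ℝ} {Φ : M₁}
    {ξ : M₂} (h : IsEigentriple K S P ω Φ ξ) (hω : ω ≠ 0) : P a ξ = 0 := by
  simpa [hω, ha] using h.1 a

theorem IsEigentriple.pairing_right_eq_zero {a : M₁} {b : M₂} (ha : ∀ Φ, K Φ a = 0)
    (hb : ∀ ξ, S ξ b = P a ξ) {ω : ℝ} {Φ : M₁} {ξ : M₂} (h : IsEigentriple K S P ω Φ ξ)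
    (hω : ω ≠ 0) : P Φ b = 0 := by
  simpa [hω, hb, h.pairing_left_eq_zero ha hω] using h.2 b

theorem isEigentriple_of_isMinOn {ι : Type*} [Fintype ι] (hK : K.IsSymm) (hS : S.IsSymm)
    {A : ι → M₁} {B : ι → M₂} (hAB : ∀ i k, i ≠ k → P (A i) (B k) = 0)
    (hAA : ∀ i, P (A i) (B i) ≠ 0) {Φ : M₁} {ξ : M₂}
    (hΦ : ∀ i, P Φ (B i) = 0 ∧ K Φ (A i) = 0) (hξ : ∀ i, P (A i) ξ = 0 ∧ S ξ (B i) = 0)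
    (hpair : P Φ ξ = 1)
    (hmin : ∀ Ψ η, (∀ i, P Ψ (B i) = 0 ∧ P (A i) η = 0) → P Ψ η = 1 →
      K Φ Φ + S ξ ξ ≤ K Ψ Ψ + S η η) :
    IsEigentriple K S P ((K Φ Φ + S ξ ξ) / 2) Φ ξ := by
  let W : Submodule ℝ (M₁ × M₂) :=
    ⨅ i, (LinearMap.ker (P.flip (B i))).prod (LinearMap.ker (P (A i)))
  have mem_W : ∀ Ψ η, (Ψ, η) ∈ W ↔ ∀ i, P Ψ (B i) = 0 ∧ P (A i) η = 0 := by simp [W]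
  have hEL : ∀ f g, (∀ i, P f (B i) = 0 ∧ P (A i) g = 0) →
      K Φ f + S ξ g = (K Φ Φ + S ξ ξ) / 2 * (P f ξ + P Φ g) := by
    intro f g hfg
    have := QuadraticMap.polar_eq_mul_polar_of_isMinOn (W := W) (u := (Φ, ξ))
      (Q := K.toQuadraticMap.prod S.toQuadraticMap)
      (R := LinearMap.BilinMap.toQuadraticMap (P.compl₁₂ (.fst ℝ M₁ M₂) (.snd ℝ M₁ M₂)))
      ((mem_W _ _).2 fun i => ⟨(hΦ i).1, (hξ i).1⟩) hpair
      (fun ⟨Ψ, η⟩ ⟨hΨη, h1⟩ => hmin Ψ η ((mem_W Ψ η).1 hΨη) h1) ((mem_W f g).2 hfg)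
    simp [LinearMap.BilinMap.polar_toQuadraticMap, hK.eq f, hS.eq g] at this
    linear_combination this / 2
  constructor
  · have := LinearMap.eq_of_eqOn_biorthogonal (L := fun i => P.flip (B i)) (z := A)
      (T := K Φ) (T' := ((K Φ Φ + S ξ ξ) / 2) • P.flip ξ) (fun i k hik => hAB k i hik.symm) hAA
      (fun f hf => by simpa using hEL f 0 fun i => ⟨hf i, by simp⟩)
      (fun i => by simp [(hΦ i).2, (hξ i).1])
    exact fun f => by simpa using LinearMap.congr_fun this f
  · have := LinearMap.eq_of_eqOn_biorthogonal (L := fun i => P (A i)) (z := B)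
      (T := S ξ) (T' := ((K Φ Φ + S ξ ξ) / 2) • P Φ) hAB hAA
      (fun g hg => by simpa using hEL 0 g fun i => ⟨by simp, hg i⟩)
      (fun i => by simp [(hΦ i).1, (hξ i).2])
    exact fun g => by simpa using LinearMap.congr_fun this g

/-- `a` and `b` stand for the constant function `1`: pairing against them integrates over the free
surface. -/
theorem isEigentriple_of_isMinOn_of_orthogonal {ι : Type*} [Fintype ι] (hK : K.IsSymm)
    (hS : S.IsSymm) (hS₀ : ∀ Φ ξ, S ξ ξ = 0 → P Φ ξ = 0) {a : M₁} {b : M₂}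
    (ha : ∀ Φ, K Φ a = 0) (hb : ∀ ξ, S ξ b = P a ξ) (hab : P a b ≠ 0) {ω : ι → ℝ}
    {Φs : ι → M₁} {ξs : ι → M₂} (hsol : ∀ j, IsEigentriple K S P (ω j) (Φs j) (ξs j))
    (hdist : ∀ j k, j ≠ k → |ω j| ≠ |ω k|) (hpairs : ∀ j, P (Φs j) (ξs j) ≠ 0)
    {Φ : M₁} {ξ : M₂} (hΦ : P Φ b = 0) (hξ : P a ξ = 0)
    (horth : ∀ j, P Φ (ξs j) = 0 ∧ P (Φs j) ξ = 0) (hpair : P Φ ξ = 1)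
    (hmin : ∀ Ψ η, P Ψ b = 0 → P a η = 0 → (∀ j, P Ψ (ξs j) = 0 ∧ P (Φs j) η = 0) →
      P Ψ η = 1 → K Φ Φ + S ξ ξ ≤ K Ψ Ψ + S η η) :
    IsEigentriple K S P ((K Φ Φ + S ξ ξ) / 2) Φ ξ := by
  have hω j := (hsol j).ne_zero hS₀ (hpairs j)
  refine isEigentriple_of_isMinOn (A := fun i => i.elim a Φs) (B := fun i => i.elim b ξs)
    hK hS ?_ ?_ ?_ ?_ hpair fun Ψ η h => hmin Ψ η (h none).1 (h none).2 fun j => h (some j)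
  · rintro (_ | j) (_ | k) hjk
    · exact absurd rfl hjk
    · exact (hsol k).pairing_left_eq_zero ha (hω k)
    · exact (hsol j).pairing_right_eq_zero ha hb (hω j)
    · exact (hsol j).pairing_eq_zero_of_abs_ne hK hS (hsol k) (hdist j k (by simpa using hjk))
  · rintro (_ | j)
    exacts [hab, hpairs j]
  · rintro (_ | j) <;> simp only [Option.elim_none, Option.elim_some]
    · exact ⟨hΦ, ha Φ⟩
    · exact ⟨(horth j).1, by rw [hK.eq, (hsol j).1, (horth j).1, mul_zero]⟩
  · rintro (_ | j) <;> simp only [Option.elim_none, Option.elim_some]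
    · exact ⟨hξ, by rw [hb, hξ]⟩
    · exact ⟨(horth j).2, by rw [hS.eq, (hsol j).2, (horth j).2, mul_zero]⟩

end Eigentriple

section ContDiffSubmodule

variable (E : Type*) [NormedAddCommGroup E] [NormedSpace ℝ E] (n : WithTop ℕ∞)

def contDiffSubmodule : Submodule ℝ (E → ℝ) where
  carrier := {f | ContDiff ℝ n f}
  add_mem' := ContDiff.add
  zero_mem' := contDiff_const
  smul_mem' c _ hf := hf.const_smul c

instance : One (contDiffSubmodule E n) := ⟨⟨1, contDiff_const⟩⟩

instance : CoeFun (contDiffSubmodule E n) (fun _ => E → ℝ) := ⟨Subtype.val⟩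

variable {E n}

@[simp]
theorem mem_contDiffSubmodule {f : E → ℝ} : f ∈ contDiffSubmodule E n ↔ ContDiff ℝ n f :=
  Iff.rfl

namespace contDiffSubmodule

@[simp]
theorem coe_one : ((1 : contDiffSubmodule E n) : E → ℝ) = 1 := rfl

theorem contDiff (f : contDiffSubmodule E n) : ContDiff ℝ n (f : E → ℝ) := f.2

def toContinuousMap : contDiffSubmodule E n →ₗ[ℝ] C(E, ℝ) where
  toFun f := ⟨f, (contDiff f).continuous⟩
  map_add' _ _ := rfl
  map_smul' _ _ := rfl

def funLeft {E' : Type*} [NormedAddCommGroup E'] [NormedSpace ℝ E'] (e : E' → E)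
    (he : ContDiff ℝ n e) : contDiffSubmodule E n →ₗ[ℝ] contDiffSubmodule E' n :=
  (LinearMap.funLeft ℝ ℝ e).restrict fun _ hf => ContDiff.comp (E := E') (F := E) (G := ℝ) hf he

end contDiffSubmodule

end ContDiffSubmodule

section Gradient

variable {E : Type*} [NormedAddCommGroup E] [InnerProductSpace ℝ E] [CompleteSpace E]

theorem gradient_add_s9 {f g : E → ℝ} {x : E} (hf : DifferentiableAt ℝ f x)
    (hg : DifferentiableAt ℝ g x) : ∇ (f + g) x = ∇ f x + ∇ g x := by
  simp [gradient, fderiv_add hf hg]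

theorem gradient_const_smul {f : E → ℝ} {x : E} (hf : DifferentiableAt ℝ f x) (c : ℝ) :
    ∇ (c • f) x = c • ∇ f x := by
  simp [gradient, fderiv_const_smul hf c]

open contDiffSubmodule in
def gradientLinearMap : contDiffSubmodule E 1 →ₗ[ℝ] C(E, E) where
  toFun f := ⟨∇ f, (InnerProductSpace.toDual ℝ E).symm.continuous.comp
    ((contDiff f).continuous_fderiv one_ne_zero)⟩
  map_add' f g := ContinuousMap.ext fun x =>
    gradient_add_s9 ((contDiff f).differentiable one_ne_zero x)
      ((contDiff g).differentiable one_ne_zero x)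
  map_smul' c f := ContinuousMap.ext fun x =>
    gradient_const_smul ((contDiff f).differentiable one_ne_zero x) c

end Gradient

section SetInnerForm

variable {X V : Type*} [PseudoMetricSpace X] [ProperSpace X] [MeasurableSpace X]
  [OpensMeasurableSpace X] (μ : Measure X) [IsFiniteMeasureOnCompacts μ]
  [NormedAddCommGroup V] [InnerProductSpace ℝ V] {D : Set X}

theorem Continuous.integrableOn_of_isBounded_s9 {G : Type*} [NormedAddCommGroup G] {f : X → G}
    (hf : Continuous f) (hD : IsBounded D) : IntegrableOn f D μ :=
  (hf.continuousOn.integrableOn_compact' hD.isCompact_closure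
    isClosed_closure.measurableSet).mono_set subset_closure

theorem integrableOn_inner_of_isBounded (hD : IsBounded D) (f g : C(X, V)) :
    IntegrableOn (fun x => ⟪f x, g x⟫) D μ :=
  (by fun_prop : Continuous fun x => ⟪f x, g x⟫).integrableOn_of_isBounded_s9 μ hD

def setInnerForm (hD : IsBounded D) : BilinForm ℝ C(X, V) :=
  LinearMap.mk₂ ℝ (fun f g => ∫ x in D, ⟪f x, g x⟫ ∂μ)
    (fun f f' g => by
      simp only [ContinuousMap.add_apply, inner_add_left]
      exact integral_add (integrableOn_inner_of_isBounded μ hD f g)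
        (integrableOn_inner_of_isBounded μ hD f' g))
    (fun c f g => by
      simp only [ContinuousMap.smul_apply, real_inner_smul_left, integral_const_mul, smul_eq_mul])
    (fun f g g' => by
      simp only [ContinuousMap.add_apply, inner_add_right]
      exact integral_add (integrableOn_inner_of_isBounded μ hD f g)
        (integrableOn_inner_of_isBounded μ hD f g'))
    (fun c f g => by
      simp only [ContinuousMap.smul_apply, real_inner_smul_right, integral_const_mul, smul_eq_mul])

theorem setInnerForm_apply (hD : IsBounded D) (f g : C(X, V)) :
    setInnerForm μ hD f g = ∫ x in D, ⟪f x, g x⟫ ∂μ := rfl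

theorem setInnerForm_isSymm (hD : IsBounded D) : (setInnerForm (V := V) μ hD).IsSymm :=
  ⟨fun f g => by simp only [setInnerForm_apply, real_inner_comm]⟩

end SetInnerForm

section SloshingForms

variable {E E' : Type*} [NormedAddCommGroup E] [InnerProductSpace ℝ E] [ProperSpace E]
  [MeasurableSpace E] [BorelSpace E] (μ : Measure E) [IsFiniteMeasureOnCompacts μ] {D : Set E}
  (hD : IsBounded D) [NormedAddCommGroup E'] [NormedSpace ℝ E']

def dirichletForm : BilinForm ℝ (contDiffSubmodule E 1) :=
  (setInnerForm μ hD).compl₁₂ gradientLinearMap gradientLinearMap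

def l2Form : BilinForm ℝ (contDiffSubmodule E 1) :=
  (setInnerForm μ hD).compl₁₂ contDiffSubmodule.toContinuousMap contDiffSubmodule.toContinuousMap

def surfaceForm (Bo : ℝ) : BilinForm ℝ (contDiffSubmodule E 1) :=
  l2Form μ hD + Bo⁻¹ • dirichletForm μ hD

def tracePairing (e : E → E') (he : ContDiff ℝ 1 e) :
    contDiffSubmodule E' 1 →ₗ[ℝ] contDiffSubmodule E 1 →ₗ[ℝ] ℝ :=
  l2Form μ hD ∘ₗ contDiffSubmodule.funLeft e he

variable {e : E → E'} (he : ContDiff ℝ 1 e)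

theorem dirichletForm_apply (f g : contDiffSubmodule E 1) :
    dirichletForm μ hD f g = ∫ x in D, ⟪∇ f x, ∇ g x⟫ ∂μ := rfl

theorem l2Form_apply (f g : contDiffSubmodule E 1) :
    l2Form μ hD f g = ∫ x in D, f x * g x ∂μ := by
  show ∫ x in D, ⟪f x, g x⟫ ∂μ = _
  simp [mul_comm]

theorem surfaceForm_apply (Bo : ℝ) (f g : contDiffSubmodule E 1) :
    surfaceForm μ hD Bo f g = ∫ x in D, (f x * g x + Bo⁻¹ * ⟪∇ f x, ∇ g x⟫) ∂μ := by
  have hf := (contDiffSubmodule.contDiff f).continuous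
  have hg := (contDiffSubmodule.contDiff g).continuous
  have hfg := integrableOn_inner_of_isBounded μ hD (gradientLinearMap f) (gradientLinearMap g)
  rw [integral_add (f := fun x => f x * g x) (g := fun x => Bo⁻¹ * ⟪∇ f x, ∇ g x⟫)
      ((hf.mul hg).integrableOn_of_isBounded_s9 μ hD) (hfg.const_mul _),
    integral_const_mul, ← l2Form_apply, ← dirichletForm_apply]
  rfl

theorem tracePairing_apply (Φ : contDiffSubmodule E' 1) (ξ : contDiffSubmodule E 1) :
    tracePairing μ hD e he Φ ξ = ∫ x in D, Φ (e x) * ξ x ∂μ :=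
  l2Form_apply μ hD _ _

theorem dirichletForm_isSymm : (dirichletForm μ hD).IsSymm :=
  ⟨fun _ _ => (setInnerForm_isSymm μ hD).eq _ _⟩

theorem surfaceForm_isSymm (Bo : ℝ) : (surfaceForm μ hD Bo).IsSymm :=
  (⟨fun _ _ => (setInnerForm_isSymm μ hD).eq _ _⟩ : (l2Form μ hD).IsSymm).add
    ((dirichletForm_isSymm μ hD).smul _)

theorem dirichletForm_apply_one (f : contDiffSubmodule E 1) : dirichletForm μ hD f 1 = 0 := by
  simp [dirichletForm_apply]

theorem surfaceForm_apply_one (Bo : ℝ) (ξ : contDiffSubmodule E 1) :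
    surfaceForm μ hD Bo ξ 1 = tracePairing μ hD e he 1 ξ := by
  simp [surfaceForm_apply, tracePairing_apply]

theorem l2Form_self_nonneg (f : contDiffSubmodule E 1) : 0 ≤ l2Form μ hD f f := by
  rw [l2Form_apply]
  exact integral_nonneg fun x => mul_self_nonneg _

theorem dirichletForm_self_nonneg (f : contDiffSubmodule E 1) : 0 ≤ dirichletForm μ hD f f :=
  integral_nonneg fun _ => real_inner_self_nonneg

theorem tracePairing_eq_zero_of_surfaceForm_self_eq_zero {Bo : ℝ} (hBo : 0 ≤ Bo)
    (Φ : contDiffSubmodule E' 1) {ξ : contDiffSubmodule E 1} (hξ : surfaceForm μ hD Bo ξ ξ = 0) :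
    tracePairing μ hD e he Φ ξ = 0 := by
  have hl2 : l2Form μ hD ξ ξ = 0 := by
    have hK := dirichletForm_self_nonneg μ hD ξ
    have hL := l2Form_self_nonneg μ hD ξ
    simp only [surfaceForm, LinearMap.add_apply, LinearMap.smul_apply, smul_eq_mul] at hξ
    nlinarith [inv_nonneg.2 hBo]
  have hcont := (contDiffSubmodule.contDiff ξ).continuous
  rw [l2Form_apply, integral_eq_zero_iff_of_nonneg (fun x => mul_self_nonneg (ξ x))
    ((hcont.mul hcont).integrableOn_of_isBounded_s9 μ hD)] at hl2
  rw [tracePairing_apply, ← integral_zero]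
  refine integral_congr_ae (hl2.mono fun x hx => ?_)
  simp [mul_self_eq_zero.1 hx]

theorem tracePairing_one_one_ne_zero {Φ : contDiffSubmodule E' 1} {ξ : contDiffSubmodule E 1}
    (h : tracePairing μ hD e he Φ ξ ≠ 0) : tracePairing μ hD e he 1 1 ≠ 0 := by
  contrapose! h
  have hμ : μ D = 0 := by
    rw [tracePairing_apply] at h
    simpa [measureReal_eq_zero_iff hD.measure_lt_top.ne] using h
  rw [tracePairing_apply, Measure.restrict_eq_zero.2 hμ, integral_zero_measure]

end SloshingForms

section Sloshing

theorem contDiff_emb : ContDiff ℝ 1 emb := by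
  refine (contDiff_piLp 2).2 fun i => ?_
  fin_cases i <;> simp [emb] <;> fun_prop

variable {D : Set E3} {F : Set E2} (hD : IsBounded D) (hF : IsBounded F) {Bo : ℝ}

theorem isWeakSol_iff {ω : ℝ} (Φ : contDiffSubmodule E3 1) (ξ : contDiffSubmodule E2 1) :
    IsWeakSol D F Bo ω Φ ξ ↔ IsEigentriple (dirichletForm volume hD) (surfaceForm volume hF Bo)
      (tracePairing volume hF emb contDiff_emb) ω Φ ξ := by
  simp only [IsWeakSol, IsEigentriple, contDiffSubmodule.contDiff, true_and, Subtype.forall,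
    mem_contDiffSubmodule, dirichletForm_apply, surfaceForm_apply, tracePairing_apply,
    mul_comm (ξ _)]

theorem integral_emb_mul_eq_tracePairing (Φ : contDiffSubmodule E3 1)
    (ξ : contDiffSubmodule E2 1) :
    ∫ p in F, Φ (emb p) * ξ p = tracePairing volume hF emb contDiff_emb Φ ξ :=
  (tracePairing_apply _ hF _ Φ ξ).symm

theorem integral_mul_emb_eq_tracePairing (Φ : contDiffSubmodule E3 1)
    (ξ : contDiffSubmodule E2 1) :
    ∫ p in F, ξ p * Φ (emb p) = tracePairing volume hF emb contDiff_emb Φ ξ := by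
  simp_rw [mul_comm (ξ _)]
  exact integral_emb_mul_eq_tracePairing hF Φ ξ

theorem pairF_eq_tracePairing (Φ : contDiffSubmodule E3 1) (ξ : contDiffSubmodule E2 1) :
    pairF F Φ ξ = tracePairing volume hF emb contDiff_emb Φ ξ :=
  integral_emb_mul_eq_tracePairing hF Φ ξ

theorem adm_iff (Φ : contDiffSubmodule E3 1) (ξ : contDiffSubmodule E2 1) :
    Adm F Φ ξ ↔ tracePairing volume hF emb contDiff_emb Φ 1 = 0 ∧
      tracePairing volume hF emb contDiff_emb 1 ξ = 0 := by
  simp [Adm, tracePairing_apply, contDiffSubmodule.contDiff]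

theorem dir_add_surf (Φ : contDiffSubmodule E3 1) (ξ : contDiffSubmodule E2 1) :
    Dir D Φ + Surf F Bo ξ =
      (dirichletForm volume hD Φ Φ + surfaceForm volume hF Bo ξ ξ) / 2 := by
  simp only [Dir, Surf, dirichletForm_apply, surfaceForm_apply, real_inner_self_eq_norm_sq, sq]
  ring

end Sloshing

theorem higher_mode_minimizer_is_weakSol_general
    (D : Set E3) (F : Set E2)
    (hD : Bornology.IsBounded D) (hF : Bornology.IsBounded F)
    (Bo : ℝ) (hBo : 0 < Bo)
    (m : ℕ)
    (ωs : Fin (m - 1) → ℝ) (Φs : Fin (m - 1) → E3 → ℝ) (ξs : Fin (m - 1) → E2 → ℝ)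
    (hsol : ∀ j, IsWeakSol D F Bo (ωs j) (Φs j) (ξs j))
    (hdist : ∀ j k, j ≠ k → |ωs j| ≠ |ωs k|)
    (hpairs : ∀ j, pairF F (Φs j) (ξs j) ≠ 0)
    (Φm : E3 → ℝ) (ξm : E2 → ℝ)
    (hadm : Adm F Φm ξm)
    (horth : ∀ j, (∫ p in F, Φm (emb p) * ξs j p) = 0 ∧
      (∫ p in F, ξm p * Φs j (emb p)) = 0)
    (hpair : pairF F Φm ξm = 1)
    (hmin : ∀ Φ : E3 → ℝ, ∀ ξ : E2 → ℝ, Adm F Φ ξ →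
      (∀ j, (∫ p in F, Φ (emb p) * ξs j p) = 0 ∧
        (∫ p in F, ξ p * Φs j (emb p)) = 0) →
      pairF F Φ ξ = 1 →
      Dir D Φm + Surf F Bo ξm ≤ Dir D Φ + Surf F Bo ξ) :
    IsWeakSol D F Bo (Dir D Φm + Surf F Bo ξm) Φm ξm := by
  lift Φm to contDiffSubmodule E3 1 using hadm.1
  lift ξm to contDiffSubmodule E2 1 using hadm.2.1
  lift Φs to Fin (m - 1) → contDiffSubmodule E3 1 using fun j => (hsol j).1
  lift ξs to Fin (m - 1) → contDiffSubmodule E2 1 using fun j => (hsol j).2.1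
  simp only [pairF_eq_tracePairing hF, integral_emb_mul_eq_tracePairing hF,
    integral_mul_emb_eq_tracePairing hF, isWeakSol_iff hD hF, adm_iff hF] at *
  rw [dir_add_surf hD hF]
  refine isEigentriple_of_isMinOn_of_orthogonal (dirichletForm_isSymm _ hD)
    (surfaceForm_isSymm _ hF Bo)
    (fun Ψ _ => tracePairing_eq_zero_of_surfaceForm_self_eq_zero _ hF _ hBo.le Ψ)
    (dirichletForm_apply_one _ hD) (surfaceForm_apply_one _ hF _ Bo)
    (tracePairing_one_one_ne_zero _ hF _ (hpair ▸ one_ne_zero)) hsol hdist hpairs hadm.1 hadm.2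
    horth hpair fun Ψ η hΨ hη hΨη hΨη₁ => ?_
  have hle := hmin Ψ η ((adm_iff hF Ψ η).2 ⟨hΨ, hη⟩)
    (by simpa only [integral_emb_mul_eq_tracePairing hF, integral_mul_emb_eq_tracePairing hF])
    (by rwa [pairF_eq_tracePairing hF])
  rw [dir_add_surf hD hF, dir_add_surf hD hF] at hle
  linarith

/-- Euler–Lagrange part of Theorem 4.4, Rayleigh–Ritz for higher
modes. A minimizer of `D[Φ] + S[ξ]` over the class `𝒜_m` of admissible pairs
orthogonal to the first `m−1` eigenpairs, subject to `⟨Φ,ξ⟩_F = 1`, is a weak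
solution of the sloshing problem with surface tension, with eigenvalue
`ω_m = D[Φ_m] + S[ξ_m]`. -/
theorem higher_mode_minimizer_is_weakSol
    (D : Set E3) (F : Set E2)
    (hD : Bornology.IsBounded D) (hF : Bornology.IsBounded F)
    (hDm : MeasurableSet D) (hFm : MeasurableSet F)
    (Bo : ℝ) (hBo : 0 < Bo)
    (m : ℕ) (hm : 1 < m)
    (ωs : Fin (m - 1) → ℝ) (Φs : Fin (m - 1) → E3 → ℝ) (ξs : Fin (m - 1) → E2 → ℝ)
    (hsol : ∀ j, IsWeakSol D F Bo (ωs j) (Φs j) (ξs j))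
    (hdist : ∀ j k, j ≠ k → |ωs j| ≠ |ωs k|)
    (hpairs : ∀ j, pairF F (Φs j) (ξs j) ≠ 0)
    (Φm : E3 → ℝ) (ξm : E2 → ℝ)
    (hadm : Adm F Φm ξm)
    (horth : ∀ j, (∫ p in F, Φm (emb p) * ξs j p) = 0 ∧
      (∫ p in F, ξm p * Φs j (emb p)) = 0)
    (hpair : pairF F Φm ξm = 1)
    (hmin : ∀ Φ : E3 → ℝ, ∀ ξ : E2 → ℝ, Adm F Φ ξ →
      (∀ j, (∫ p in F, Φ (emb p) * ξs j p) = 0 ∧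
        (∫ p in F, ξ p * Φs j (emb p)) = 0) →
      pairF F Φ ξ = 1 →
      Dir D Φm + Surf F Bo ξm ≤ Dir D Φ + Surf F Bo ξ) :
    IsWeakSol D F Bo (Dir D Φm + Surf F Bo ξm) Φm ξm :=
  higher_mode_minimizer_is_weakSol_general D F hD hF Bo hBo m ωs Φs ξs hsol hdist hpairs Φm ξm hadm
    horth hpair hmin
end
end
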